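/- arXiv:2601.17619 — 2 statements merged into one kernel-verified Lean document; each statement's English description precedes it below -/
import Mathlib

section
/- Let H be a directed acyclic graph on vertex set V with |V| = n. A collection T of induced tubes of H is an admissible tubing of H if and only if: (1) |T| = n; (2) the tubes in T are pairwise non-overlapping; and (3) for each tube T ∈ T there are no edges v → w of H with v ∉ T and w ∈ T. -/
/-!
In a laminar family of tubes with no incoming edges, every tube `T` has a private vertex, one
lying in no smaller tube of the family. Otherwise take a maximal tube `M < T` and an edge of `T`
from `M` to some `b ∉ M`: oriented into `M` it contradicts closedness of `M`; oriented towards `b`,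
the smaller tube through `b` also contains its tail, so it nests with `M`, contradicting
maximality. Distinct tubes have distinct private vertices, so such a family has at most `|V|`
tubes; with exactly `|V|` of them, sending each vertex to the tube it is private to is a vertex
labeling, increasing along `H` by closedness. Maximality comes from counting: a further
compatible tube would again have no incoming edge. Conversely, a labeling increasing along `H`
makes every tube contain the tubes of the predecessors of its vertices.
-/

open SimpleGraph

namespace Cosmo

variable {V : Type*}

/-- A tube of `G` is a connected subgraph. -/
def IsTube (G : SimpleGraph V) (T : G.Subgraph) : Prop := T.Connected

/-- Tubes are nested if one contains the other. -/
def Nested {G : SimpleGraph V} (S T : G.Subgraph) : Prop := S ≤ T ∨ T ≤ S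

/-- Tubes overlap if their (vertex) intersection is nonempty and they are not nested. -/
def Overlapping {G : SimpleGraph V} (S T : G.Subgraph) : Prop :=
  (S.verts ∩ T.verts).Nonempty ∧ ¬ Nested S T

/-- Tubes are incompatible if there is an edge of `G` between them and they are not nested. -/
def Incompatible {G : SimpleGraph V} (S T : G.Subgraph) : Prop :=
  (∃ u w, G.Adj u w ∧ u ∈ S.verts ∧ w ∈ T.verts) ∧ ¬ Nested S T

/-- Tubes are compatible if they are not incompatible. -/
def Compatible {G : SimpleGraph V} (S T : G.Subgraph) : Prop := ¬ Incompatible S T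

/-- A complete tubing: a maximal collection of pairwise non-overlapping tubes. -/
def IsCompleteTubing (G : SimpleGraph V) (𝒯 : Set G.Subgraph) : Prop :=
  Maximal (fun 𝒞 : Set G.Subgraph =>
    (∀ T ∈ 𝒞, IsTube G T) ∧ 𝒞.Pairwise fun S T => ¬ Overlapping S T) 𝒯

/-- An admissible tubing: a maximal collection of pairwise compatible induced tubes. -/
def IsAdmissibleTubing (G : SimpleGraph V) (𝒯 : Set G.Subgraph) : Prop :=
  Maximal (fun 𝒞 : Set G.Subgraph =>
    (∀ T ∈ 𝒞, IsTube G T ∧ T.IsInduced) ∧ 𝒞.Pairwise Compatible) 𝒯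

/-- A labeling of an admissible tubing by the vertices, as in the bijection lemma:
`g v` is the tube associated to `v`, i.e. `v ∈ g v` and `v` avoids all strictly
smaller tubes of the tubing. -/
def IsVertexLabeling (G : SimpleGraph V) (𝒯 : Set G.Subgraph) (g : V → G.Subgraph) : Prop :=
  Set.BijOn g Set.univ 𝒯 ∧ ∀ v, v ∈ (g v).verts ∧ ∀ S ∈ 𝒯, S < g v → v ∉ S.verts

variable {G : SimpleGraph V}

lemma le_of_verts_subset_of_isInduced {S T : G.Subgraph} (hT : T.IsInduced)
    (h : S.verts ⊆ T.verts) : S ≤ T :=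
  ⟨h, fun _ _ hab => hT (h (S.edge_vert hab)) (h (S.edge_vert hab.symm)) (S.adj_sub hab)⟩

lemma verts_ssubset_of_lt_of_isInduced {S T : G.Subgraph} (hS : S.IsInduced) (h : S < T) :
    S.verts ⊂ T.verts :=
  ⟨Subgraph.verts_mono h.le, fun hsub => h.not_ge (le_of_verts_subset_of_isInduced hS hsub)⟩

theorem _root_.SimpleGraph.Subgraph.Connected.exists_adj_mem_notMem {T : G.Subgraph}
    (hT : T.Connected) {A : Set V} {x y : V} (hxT : x ∈ T.verts) (hxA : x ∈ A)
    (hyT : y ∈ T.verts) (hyA : y ∉ A) :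
    ∃ a ∈ A, ∃ b ∉ A, b ∈ T.verts ∧ G.Adj a b := by
  obtain ⟨p⟩ := hT.preconnected ⟨x, hxT⟩ ⟨y, hyT⟩
  obtain ⟨d, -, hd₁, hd₂⟩ := p.exists_boundary_dart {z | (z : V) ∈ A} hxA hyA
  exact ⟨d.fst, hd₁, d.snd, hd₂, d.snd.2, T.adj_sub d.adj⟩

lemma Overlapping.symm {S T : G.Subgraph} (h : Overlapping S T) : Overlapping T S :=
  ⟨Set.inter_comm S.verts T.verts ▸ h.1, fun hn => h.2 hn.symm⟩

lemma nested_of_not_overlapping {S T : G.Subgraph} (h : ¬ Overlapping S T) {x : V}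
    (hxS : x ∈ S.verts) (hxT : x ∈ T.verts) : Nested S T :=
  not_not.1 fun hn => h ⟨⟨x, hxS, hxT⟩, hn⟩

lemma Overlapping.incompatible {S T : G.Subgraph} (hS : IsTube G S) (hT : T.IsInduced)
    (h : Overlapping S T) : Incompatible S T := by
  obtain ⟨⟨x, hxS, hxT⟩, hn⟩ := h
  obtain ⟨y, hyS, hyT⟩ : ∃ y ∈ S.verts, y ∉ T.verts :=
    Set.not_subset.1 fun hsub => hn (.inl (le_of_verts_subset_of_isInduced hT hsub))
  obtain ⟨a, haT, b, hbT, hbS, hab⟩ := hS.exists_adj_mem_notMem hxS hxT hyS hyT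
  exact ⟨⟨b, a, hab.symm, hbS, haT⟩, hn⟩

lemma Compatible.not_overlapping {S T : G.Subgraph} (hST : Compatible S T) (hS : IsTube G S)
    (hT : T.IsInduced) : ¬ Overlapping S T :=
  fun h => hST (h.incompatible hS hT)

lemma Compatible.nested_of_adj {S T : G.Subgraph} (hST : Compatible S T) {a b : V}
    (hab : G.Adj a b) (ha : a ∈ S.verts) (hb : b ∈ T.verts) : Nested S T :=
  not_not.1 fun hn => hST ⟨⟨a, b, hab, ha, hb⟩, hn⟩

def IsLaminar (𝒯 : Set G.Subgraph) : Prop :=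
  𝒯.Pairwise fun S T => ¬ Overlapping S T

lemma IsLaminar.nested {𝒯 : Set G.Subgraph} (h𝒯 : IsLaminar 𝒯) {S T : G.Subgraph}
    (hS : S ∈ 𝒯) (hT : T ∈ 𝒯) {x : V} (hxS : x ∈ S.verts) (hxT : x ∈ T.verts) : Nested S T := by
  rcases eq_or_ne S T with rfl | hne
  · exact .inl le_rfl
  · exact nested_of_not_overlapping (h𝒯 hS hT hne) hxS hxT

lemma IsLaminar.eq_of_mem_of_mem {𝒯 : Set G.Subgraph} (h𝒯 : IsLaminar 𝒯) {S T : G.Subgraph}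
    (hS : S ∈ 𝒯) (hT : T ∈ 𝒯) {x : V} (hxS : x ∈ S.verts) (hxT : x ∈ T.verts)
    (hSx : ∀ R ∈ 𝒯, R < S → x ∉ R.verts) (hTx : ∀ R ∈ 𝒯, R < T → x ∉ R.verts) : S = T := by
  rcases h𝒯.nested hS hT hxS hxT with hle | hle
  · exact hle.eq_or_lt.resolve_right fun hlt => hTx S hS hlt hxS
  · exact (hle.eq_or_lt.resolve_right fun hlt => hSx T hT hlt hxT).symm

lemma IsAdmissibleTubing.isLaminar {𝒯 : Set G.Subgraph} (h𝒯 : IsAdmissibleTubing G 𝒯) :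
    IsLaminar 𝒯 :=
  fun S hS T hT hne => (h𝒯.1.2 hS hT hne).not_overlapping (h𝒯.1.1 S hS).1 (h𝒯.1.1 T hT).2

def NoIncomingEdge (H : V → V → Prop) (s : Set V) : Prop :=
  ∀ u v, H u v → v ∈ s → u ∈ s

lemma compatible_of_not_overlapping {H : V → V → Prop} (hG : G ≤ fromRel H)
    {S T : G.Subgraph} (hS : NoIncomingEdge H S.verts) (hT : NoIncomingEdge H T.verts)
    (h : ¬ Overlapping S T) : Compatible S T := by
  rintro ⟨⟨u, w, huw, huS, hwT⟩, hn⟩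
  refine h ⟨?_, hn⟩
  rcases ((fromRel_adj _ _ _).1 (hG huw)).2 with huw | hwu
  · exact ⟨u, huS, hT u w huw hwT⟩
  · exact ⟨w, hS w u hwu huS, hwT⟩

section VertexLabeling

variable {𝒯 : Set G.Subgraph} {g : V → G.Subgraph}

lemma IsVertexLabeling.ncard_eq (hg : IsVertexLabeling G 𝒯 g) : 𝒯.ncard = Nat.card V := by
  rw [← hg.1.image_eq, hg.1.injOn.ncard_image, Set.ncard_univ]

lemma IsVertexLabeling.le_of_mem (hg : IsVertexLabeling G 𝒯 g) (h𝒯 : IsLaminar 𝒯)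
    {v : V} {S : G.Subgraph} (hS : S ∈ 𝒯) (hvS : v ∈ S.verts) : g v ≤ S := by
  rcases h𝒯.nested (hg.1.mapsTo (Set.mem_univ v)) hS (hg.2 v).1 hvS with hle | hle
  · exact hle
  · exact hle.eq_or_lt.elim (fun h => h ▸ le_rfl) fun hlt => absurd hvS ((hg.2 v).2 S hS hlt)

lemma IsVertexLabeling.noIncomingEdge {H : V → V → Prop} (hg : IsVertexLabeling G 𝒯 g)
    (h𝒯 : IsLaminar 𝒯) (hH : ∀ u v, H u v → g u < g v) :
    ∀ T ∈ 𝒯, NoIncomingEdge H T.verts := fun _ hT u v huv hvT =>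
  Subgraph.verts_mono ((hH u v huv).le.trans (hg.le_of_mem h𝒯 hT hvT)) (hg.2 u).1

lemma IsVertexLabeling.lt_of_rel {H : V → V → Prop} (hg : IsVertexLabeling G 𝒯 g)
    (h𝒯 : IsLaminar 𝒯) (hclosed : ∀ T ∈ 𝒯, NoIncomingEdge H T.verts)
    (hirrefl : ∀ v, ¬ H v v) {u v : V} (huv : H u v) : g u < g v := by
  have hgv : g v ∈ 𝒯 := hg.1.mapsTo (Set.mem_univ v)
  refine (hg.le_of_mem h𝒯 hgv (hclosed _ hgv u v huv (hg.2 v).1)).lt_of_ne fun he => ?_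
  exact hirrefl v (hg.1.injOn (Set.mem_univ u) (Set.mem_univ v) he ▸ huv)

/-- An incoming edge `u → w` of `U` would force `U ≤ g u`, putting `w` in the tube of `u`. -/
lemma IsVertexLabeling.noIncomingEdge_of_compatible {H : V → V → Prop}
    (hg : IsVertexLabeling G 𝒯 g) (h𝒯 : IsLaminar 𝒯) (hH : ∀ u v, H u v → g u < g v)
    (hG : fromRel H ≤ G) {U : G.Subgraph} (hU : ∀ T ∈ 𝒯, Compatible U T) :
    NoIncomingEdge H U.verts := by
  intro u w huw hwU
  by_contra huU
  have hgu : g u ∈ 𝒯 := hg.1.mapsTo (Set.mem_univ u)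
  have hwu : G.Adj w u :=
    hG ((fromRel_adj _ _ _).2 ⟨fun h => huU (h ▸ hwU), .inr huw⟩)
  rcases (hU _ hgu).nested_of_adj hwu hwU (hg.2 u).1 with hle | hle
  · exact (hH u w huw).not_ge (hg.le_of_mem h𝒯 hgu (Subgraph.verts_mono hle hwU))
  · exact huU (Subgraph.verts_mono hle (hg.2 u).1)

end VertexLabeling

structure IsClosedLaminarFamily (H : V → V → Prop) (𝒯 : Set G.Subgraph) : Prop where
  isTube : ∀ T ∈ 𝒯, IsTube G T
  isInduced : ∀ T ∈ 𝒯, T.IsInduced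
  isLaminar : IsLaminar 𝒯
  noIncomingEdge : ∀ T ∈ 𝒯, NoIncomingEdge H T.verts

namespace IsClosedLaminarFamily

variable {H : V → V → Prop} {𝒯 : Set G.Subgraph}

lemma insert (h𝒯 : IsClosedLaminarFamily H 𝒯) {U : G.Subgraph} (hU : IsTube G U)
    (hUi : U.IsInduced) (hUH : NoIncomingEdge H U.verts) (hUc : ∀ T ∈ 𝒯, Compatible U T) :
    IsClosedLaminarFamily H (insert U 𝒯) where
  isTube := Set.forall_mem_insert.2 ⟨hU, h𝒯.isTube⟩
  isInduced := Set.forall_mem_insert.2 ⟨hUi, h𝒯.isInduced⟩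
  isLaminar := Set.pairwise_insert.2 ⟨h𝒯.isLaminar, fun T hT _ =>
    have h := (hUc T hT).not_overlapping hU (h𝒯.isInduced T hT)
    ⟨h, fun hov => h hov.symm⟩⟩
  noIncomingEdge := Set.forall_mem_insert.2 ⟨hUH, h𝒯.noIncomingEdge⟩

lemma exists_private_vertex [Finite V] (h𝒯 : IsClosedLaminarFamily H 𝒯) (hG : G ≤ fromRel H)
    {T : G.Subgraph} (hT : T ∈ 𝒯) : ∃ v ∈ T.verts, ∀ S ∈ 𝒯, S < T → v ∉ S.verts := by
  by_contra! hcover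
  obtain ⟨v₀, hv₀⟩ := (h𝒯.isTube T hT).nonempty
  obtain ⟨S₀, hS₀, hS₀T, -⟩ := hcover v₀ hv₀
  obtain ⟨M, ⟨hM, hMT⟩, hMmax⟩ :=
    (Set.toFinite {S | S ∈ 𝒯 ∧ S < T}).exists_maximal ⟨S₀, hS₀, hS₀T⟩
  obtain ⟨x, hxM⟩ := (h𝒯.isTube M hM).nonempty
  obtain ⟨y, hyT, hyM⟩ :=
    Set.exists_of_ssubset (verts_ssubset_of_lt_of_isInduced (h𝒯.isInduced M hM) hMT)
  obtain ⟨a, haM, b, hbM, hbT, hab⟩ :=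
    (h𝒯.isTube T hT).exists_adj_mem_notMem (Subgraph.verts_mono hMT.le hxM) hxM hyT hyM
  rcases ((fromRel_adj _ _ _).1 (hG hab)).2 with hab | hba
  · obtain ⟨S, hS, hST, hbS⟩ := hcover b hbT
    have haS := h𝒯.noIncomingEdge S hS a b hab hbS
    rcases h𝒯.isLaminar.nested hS hM haS haM with hSM | hMS
    · exact hbM (Subgraph.verts_mono hSM hbS)
    · exact hbM (Subgraph.verts_mono (hMmax ⟨hS, hST⟩ hMS) hbS)
  · exact hbM (h𝒯.noIncomingEdge M hM b a hba haM)

lemma exists_injective_private [Finite V] (h𝒯 : IsClosedLaminarFamily H 𝒯)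
    (hG : G ≤ fromRel H) :
    ∃ f : 𝒯 → V, Function.Injective f ∧
      ∀ T : 𝒯, f T ∈ T.1.verts ∧ ∀ S ∈ 𝒯, S < T → f T ∉ S.verts := by
  choose f hf using fun T : 𝒯 => h𝒯.exists_private_vertex hG T.2
  refine ⟨f, fun S T hST => Subtype.ext ?_, hf⟩
  exact h𝒯.isLaminar.eq_of_mem_of_mem S.2 T.2 (hf S).1 (hST ▸ (hf T).1) (hf S).2 (hST ▸ (hf T).2)

lemma ncard_le [Finite V] (h𝒯 : IsClosedLaminarFamily H 𝒯) (hG : G ≤ fromRel H) :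
    𝒯.ncard ≤ Nat.card V := by
  obtain ⟨f, hf, -⟩ := h𝒯.exists_injective_private hG
  exact Nat.card_coe_set_eq 𝒯 ▸ Nat.card_le_card_of_injective f hf

lemma exists_isVertexLabeling [Finite V] (h𝒯 : IsClosedLaminarFamily H 𝒯)
    (hG : G ≤ fromRel H) (hcard : 𝒯.ncard = Nat.card V) :
    ∃ g : V → G.Subgraph, IsVertexLabeling G 𝒯 g := by
  obtain ⟨f, hinj, hf⟩ := h𝒯.exists_injective_private hG
  have hbij : Function.Bijective f :=
    (Nat.bijective_iff_injective_and_card f).2 ⟨hinj, by rw [Nat.card_coe_set_eq, hcard]⟩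
  set e := Equiv.ofBijective f hbij
  refine ⟨fun v => e.symm v, ⟨fun v _ => (e.symm v).2, ?_, fun T hT => ?_⟩, fun v => ?_⟩
  · exact fun u _ v _ huv => e.symm.injective (Subtype.ext huv)
  · exact ⟨f ⟨T, hT⟩, Set.mem_univ _, congrArg Subtype.val (e.symm_apply_apply ⟨T, hT⟩)⟩
  · have hv : f (e.symm v) = v := e.apply_symm_apply v
    have hfv := hf (e.symm v)
    rwa [hv] at hfv

lemma isAdmissibleTubing [Finite V] (h𝒯 : IsClosedLaminarFamily H 𝒯) (hG : G = fromRel H)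
    (hcard : 𝒯.ncard = Nat.card V) {g : V → G.Subgraph} (hg : IsVertexLabeling G 𝒯 g)
    (hH : ∀ u v, H u v → g u < g v) : IsAdmissibleTubing G 𝒯 := by
  refine ⟨⟨fun T hT => ⟨h𝒯.isTube T hT, h𝒯.isInduced T hT⟩, fun S hS T hT hne =>
    compatible_of_not_overlapping hG.le (h𝒯.noIncomingEdge S hS) (h𝒯.noIncomingEdge T hT)
      (h𝒯.isLaminar hS hT hne)⟩, fun 𝒞 h𝒞 h𝒯𝒞 U hU => ?_⟩
  by_contra hU𝒯
  have hUc : ∀ T ∈ 𝒯, Compatible U T :=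
    fun T hT => h𝒞.2 hU (h𝒯𝒞 hT) fun h => hU𝒯 (h ▸ hT)
  have hins := h𝒯.insert (h𝒞.1 U hU).1 (h𝒞.1 U hU).2
    (hg.noIncomingEdge_of_compatible h𝒯.isLaminar hH hG.ge hUc) hUc
  have hle := hins.ncard_le hG.le
  rw [Set.ncard_insert_of_notMem hU𝒯, hcard] at hle
  omega

end IsClosedLaminarFamily

/-- a collection of induced tubes of a finite DAG `H` (with underlying graph `G`)
is an admissible tubing of `H` (i.e. an admissible tubing of `G` inducing the orientation `H`)
iff it has `|V|` tubes, is pairwise non-overlapping, and no tube has an incoming edge. -/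
theorem admissibleTubing_dag_characterization {V : Type*} [Fintype V]
    (H : V → V → Prop) (hac : ∀ v, ¬ Relation.TransGen H v v)
    (G : SimpleGraph V) (hG : G = SimpleGraph.fromRel H)
    (𝒯 : Set G.Subgraph) (htube : ∀ T ∈ 𝒯, IsTube G T ∧ T.IsInduced) :
    (IsAdmissibleTubing G 𝒯 ∧
      ∃ g : V → G.Subgraph, IsVertexLabeling G 𝒯 g ∧ ∀ u v, H u v → g u < g v)
    ↔ (𝒯.ncard = Fintype.card V ∧
        (𝒯.Pairwise fun S T => ¬ Overlapping S T) ∧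
        ∀ T ∈ 𝒯, ∀ u v, H u v → v ∈ T.verts → u ∈ T.verts) := by
  rw [← Nat.card_eq_fintype_card]
  constructor
  · rintro ⟨hadm, g, hg, hH⟩
    exact ⟨hg.ncard_eq, hadm.isLaminar, hg.noIncomingEdge hadm.isLaminar hH⟩
  · rintro ⟨hcard, hlam, hclosed⟩
    have h𝒯 : IsClosedLaminarFamily H 𝒯 :=
      ⟨fun T hT => (htube T hT).1, fun T hT => (htube T hT).2, hlam, hclosed⟩
    obtain ⟨g, hg⟩ := h𝒯.exists_isVertexLabeling hG.le hcard
    have hH : ∀ u v, H u v → g u < g v := fun u v =>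
      hg.lt_of_rel hlam hclosed fun w hw => hac w (.single hw)
    exact ⟨h𝒯.isAdmissibleTubing hG hcard hg hH, g, hg, hH⟩
end Cosmo
end

section
/- Fix a finite graph G with vertex set {v_1,…,v_n} and a spanning subgraph H. The regions U_T = {(η_1,…,η_n) ∈ (−∞,0)^n : η_i < η_j whenever T_i ⊆ T_j}, as T ranges over admissible tubings of H, partition (−∞,0)^n up to a measure-zero set. Equivalently, any point of (−∞,0)^n with pairwise distinct coordinates lies in exactly one region U_T. -/
open SimpleGraph

namespace Cosmo

variable {V : Type*}

/-!
For each vertex `v` let `T_v` be the connected component of `v` among the vertices `u` with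
`η u ≤ η v`. Two such tubes joined by an edge are nested, and an induced tube compatible with all
of them is `T_m` for its `η`-largest vertex `m`; so the `T_v` form an admissible tubing, labeled
by `v ↦ T_v`, and this labeling respects `η`. Conversely, every admissible tubing is labeled by
sending `v` to the smallest of its tubes containing `v`. If that labeling respects `η`, the tube
of `v` lies inside `T_v`, and it cannot miss a vertex of `T_v`: an edge leaving it towards some
`b ∈ T_v` has `η b < η v`, and would force the tubes of `v` and `b` to nest the wrong way.
-/

lemma compatible_iff {G : SimpleGraph V} {S T : G.Subgraph} :
    Compatible S T ↔ ∀ a b, G.Adj a b → a ∈ S.verts → b ∈ T.verts → Nested S T := by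
  simp only [Compatible, Incompatible]
  constructor
  · exact fun h a b hab ha hb => not_not.1 fun hn => h ⟨⟨a, b, hab, ha, hb⟩, hn⟩
  · exact fun h ⟨⟨a, b, hab, ha, hb⟩, hn⟩ => hn (h a b hab ha hb)

lemma Compatible.symm {G : SimpleGraph V} {S T : G.Subgraph} (h : Compatible S T) :
    Compatible T S :=
  compatible_iff.2 fun a b hab ha hb => (compatible_iff.1 h b a hab.symm hb ha).symm

lemma Compatible.nested_of_mem {G : SimpleGraph V} {S T : G.Subgraph} (h : Compatible S T)
    (hS : S.Connected) {v : V} (hvS : v ∈ S.verts) (hvT : v ∈ T.verts) : Nested S T := by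
  by_cases hnt : S.verts.Nontrivial
  · have : Nontrivial S.verts := hnt.coe_sort
    obtain ⟨z, hz⟩ := hS.preconnected.exists_adj_of_nontrivial ⟨v, hvS⟩
    exact compatible_iff.1 h z v (S.adj_sub hz).symm (S.edge_vert hz.symm) hvT
  · have hv : ∀ u ∈ S.verts, u = v := fun u hu => Set.not_nontrivial_iff.1 hnt hu hvS
    refine Or.inl ⟨fun u hu => hv u hu ▸ hvT, fun a b hab => ?_⟩
    have hab' := S.adj_sub hab
    rw [hv a (S.edge_vert hab), hv b (S.edge_vert hab.symm)] at hab'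
    exact absurd hab' (G.loopless.irrefl v)

lemma _root_.SimpleGraph.Subgraph.IsInduced.le_of_verts_subset {G : SimpleGraph V}
    {S T : G.Subgraph} (hT : T.IsInduced) (h : S.verts ⊆ T.verts) : S ≤ T :=
  ⟨h, fun _ _ hab => hT (h (S.edge_vert hab)) (h (S.edge_vert hab.symm)) (S.adj_sub hab)⟩

lemma _root_.SimpleGraph.Subgraph.Connected.verts_subset_of_forall_adj {G : SimpleGraph V}
    {T : G.Subgraph} (hT : T.Connected) {A : Set V} {x : V} (hxT : x ∈ T.verts) (hxA : x ∈ A)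
    (hA : ∀ a b, T.Adj a b → a ∈ A → b ∈ A) : T.verts ⊆ A := by
  intro y hyT
  by_contra hyA
  obtain ⟨p⟩ := hT ⟨x, hxT⟩ ⟨y, hyT⟩
  obtain ⟨d, -, hd, hd'⟩ := p.exists_boundary_dart (Subtype.val ⁻¹' A) hxA hyA
  exact hd' (hA _ _ d.adj hd)

section ComponentIn

/-- `H[s]` kept on the vertex type `V`: the vertices outside `s` become isolated. -/
def restrictTo (H : SimpleGraph V) (s : Set V) : SimpleGraph V where
  Adj a b := H.Adj a b ∧ a ∈ s ∧ b ∈ s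
  symm := ⟨fun _ _ h => ⟨h.1.symm, h.2.2, h.2.1⟩⟩
  loopless := ⟨fun a h => H.loopless.irrefl a h.1⟩

/-- The connected component of `v` in the induced graph `H[s]`, as an induced subgraph of `H`.
When `v ∉ s` it is the single vertex `v`. -/
def componentIn (H : SimpleGraph V) (s : Set V) (v : V) : H.Subgraph :=
  (⊤ : H.Subgraph).induce ((restrictTo H s).connectedComponentMk v).supp

variable {H : SimpleGraph V} {s : Set V} {u v w : V}

lemma restrictTo_adj : (restrictTo H s).Adj u v ↔ H.Adj u v ∧ u ∈ s ∧ v ∈ s := Iff.rfl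

lemma mem_componentIn_iff :
    u ∈ (componentIn H s v).verts ↔ (restrictTo H s).Reachable v u := by
  simp [componentIn, reachable_comm]

lemma mem_componentIn_self : v ∈ (componentIn H s v).verts := rfl

lemma componentIn_isInduced : (componentIn H s v).IsInduced :=
  fun _ ha _ hb hab => ⟨ha, hb, hab⟩

lemma componentIn_connected : (componentIn H s v).Connected := by
  rw [componentIn, ← connected_induce_iff]
  exact ((restrictTo H s).connectedComponentMk v).connected_toSimpleGraph.mono
    fun _ _ hab => (restrictTo_adj.1 hab).1

lemma componentIn_verts_subset (hv : v ∈ s) : (componentIn H s v).verts ⊆ s := by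
  intro u hu
  obtain ⟨p⟩ := mem_componentIn_iff.1 hu
  cases p.reverse with
  | nil => exact hv
  | cons hadj _ => exact (restrictTo_adj.1 hadj).2.1

lemma mem_componentIn_of_adj (hu : u ∈ (componentIn H s v).verts)
    (huw : (restrictTo H s).Adj u w) : w ∈ (componentIn H s v).verts :=
  mem_componentIn_iff.2 ((mem_componentIn_iff.1 hu).trans huw.reachable)

lemma le_componentIn {S : H.Subgraph} (hS : S.Connected) (hSs : S.verts ⊆ s)
    (huS : u ∈ S.verts) (hu : u ∈ (componentIn H s v).verts) : S ≤ componentIn H s v :=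
  componentIn_isInduced.le_of_verts_subset <| hS.verts_subset_of_forall_adj huS hu
    fun _ _ hab ha => mem_componentIn_of_adj ha
      (restrictTo_adj.2 ⟨S.adj_sub hab, hSs (S.edge_vert hab), hSs (S.edge_vert hab.symm)⟩)

lemma exists_adj_of_subset_componentIn {A : Set V} (hA : A ⊆ (componentIn H s v).verts)
    (hv : v ∈ A) (hw : w ∈ (componentIn H s v).verts) (hwA : w ∉ A) :
    ∃ a ∈ A, ∃ b ∈ (componentIn H s v).verts \ A, H.Adj a b := by
  obtain ⟨p⟩ := mem_componentIn_iff.1 hw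
  obtain ⟨d, -, hd, hd'⟩ := p.exists_boundary_dart A hv hwA
  exact ⟨_, hd, _, ⟨mem_componentIn_of_adj (hA hd) d.adj, hd'⟩, (restrictTo_adj.1 d.adj).1⟩

end ComponentIn

namespace IsAdmissibleTubing

variable {H : SimpleGraph V} {𝒮 : Set H.Subgraph} (hS : IsAdmissibleTubing H 𝒮)
include hS

lemma connected {T : H.Subgraph} (hT : T ∈ 𝒮) : T.Connected := (hS.1.1 T hT).1

lemma isInduced {T : H.Subgraph} (hT : T ∈ 𝒮) : T.IsInduced := (hS.1.1 T hT).2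

lemma nested_of_adj {S T : H.Subgraph} (hS' : S ∈ 𝒮) (hT : T ∈ 𝒮) {a b : V} (hab : H.Adj a b)
    (ha : a ∈ S.verts) (hb : b ∈ T.verts) : Nested S T := by
  obtain rfl | hne := eq_or_ne S T
  · exact Or.inl le_rfl
  · exact compatible_iff.1 (hS.1.2 hS' hT hne) a b hab ha hb

lemma nested_of_mem {S T : H.Subgraph} (hS' : S ∈ 𝒮) (hT : T ∈ 𝒮) {v : V}
    (hvS : v ∈ S.verts) (hvT : v ∈ T.verts) : Nested S T := by
  obtain rfl | hne := eq_or_ne S T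
  · exact Or.inl le_rfl
  · exact (hS.1.2 hS' hT hne).nested_of_mem (hS.connected hS') hvS hvT

lemma mem_of_forall_compatible {T : H.Subgraph} (hT : T.Connected) (hi : T.IsInduced)
    (hc : ∀ S ∈ 𝒮, Compatible T S) : T ∈ 𝒮 := by
  refine hS.2 ⟨?_, ?_⟩ (Set.subset_insert T 𝒮) (Set.mem_insert T 𝒮)
  · rintro S (rfl | hS')
    exacts [⟨hT, hi⟩, hS.1.1 S hS']
  · exact Set.pairwise_insert.2 ⟨hS.1.2, fun _ hS' _ => ⟨hc _ hS', (hc _ hS').symm⟩⟩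

lemma componentIn_univ_mem (v : V) : componentIn H Set.univ v ∈ 𝒮 :=
  hS.mem_of_forall_compatible componentIn_connected componentIn_isInduced fun _ hS' =>
    compatible_iff.2 fun _ _ hab ha hb => Or.inr <| le_componentIn (hS.connected hS')
      (Set.subset_univ _) hb (mem_componentIn_of_adj ha (restrictTo_adj.2 ⟨hab, trivial, trivial⟩))

lemma exists_minimal_mem [Finite V] (v : V) :
    ∃ M ∈ 𝒮, v ∈ M.verts ∧ ∀ S ∈ 𝒮, v ∈ S.verts → M ≤ S := by
  obtain ⟨M, ⟨hM, hvM⟩, hmin⟩ := (Set.toFinite {S | S ∈ 𝒮 ∧ v ∈ S.verts}).exists_minimal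
    ⟨_, hS.componentIn_univ_mem v, mem_componentIn_self⟩
  refine ⟨M, hM, hvM, fun S hS' hvS => ?_⟩
  rcases hS.nested_of_mem hM hS' hvM hvS with h | h
  exacts [h, hmin ⟨hS', hvS⟩ h]

lemma exists_mem_forall_lt_not_mem [Finite V] {T : H.Subgraph} (hT : T ∈ 𝒮) :
    ∃ v ∈ T.verts, ∀ S ∈ 𝒮, S < T → v ∉ S.verts := by
  by_contra! h
  obtain ⟨t, ht⟩ := (hS.connected hT).nonempty
  obtain ⟨M, ⟨hM, hMT, htM⟩, hmax⟩ :=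
    (Set.toFinite {S | S ∈ 𝒮 ∧ S < T ∧ t ∈ S.verts}).exists_maximal (h t ht)
  -- the maximal proper subtube through `t` absorbs every `T`-edge leaving it, hence all of `T`
  have hTM : T.verts ⊆ M.verts := (hS.connected hT).verts_subset_of_forall_adj ht htM
    fun a b hab ha => by
      obtain ⟨S, hS', hST, hbS⟩ := h b (T.edge_vert hab.symm)
      rcases hS.nested_of_adj hM hS' (T.adj_sub hab) ha hbS with hMS | hSM
      exacts [(hmax ⟨hS', hST, hMS.1 htM⟩ hMS).1 hbS, hSM.1 hbS]
  exact hMT.not_ge ((hS.isInduced hM).le_of_verts_subset hTM)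

lemma eq_of_minimal {T : H.Subgraph} (hT : T ∈ 𝒮) {u v : V} (hu : u ∈ T.verts)
    (hv : v ∈ T.verts) (hminu : ∀ S ∈ 𝒮, u ∈ S.verts → T ≤ S)
    (hminv : ∀ S ∈ 𝒮, v ∈ S.verts → T ≤ S) : u = v := by
  by_contra hne
  -- the component of `u` in `T - v` would be a member of `𝒮` containing `u` but smaller than `T`
  set C := componentIn H (T.verts \ {v}) u
  have hCsub : C.verts ⊆ T.verts \ {v} := componentIn_verts_subset ⟨hu, hne⟩
  have hCT : C ≤ T := (hS.isInduced hT).le_of_verts_subset (hCsub.trans Set.sdiff_subset)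
  have hC : C ∈ 𝒮 := hS.mem_of_forall_compatible componentIn_connected componentIn_isInduced
    fun S hS' => compatible_iff.2 fun x y hxy hxC hyS => by
      by_cases hvS : v ∈ S.verts
      · exact Or.inl (hCT.trans (hminv S hS' hvS))
      rcases hS.nested_of_adj hT hS' hxy (hCT.1 hxC) hyS with hTS | hST
      · exact absurd (hTS.1 hv) hvS
      have hSsub : S.verts ⊆ T.verts \ {v} := fun w hw => ⟨hST.1 hw, fun h => hvS (h ▸ hw)⟩
      exact Or.inr <| le_componentIn (hS.connected hS') hSsub hyS
        (mem_componentIn_of_adj hxC (restrictTo_adj.2 ⟨hxy, hCsub hxC, hSsub hyS⟩))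
  exact (hCsub ((hminu C hC mem_componentIn_self).1 hv)).2 rfl

lemma exists_isVertexLabeling [Finite V] :
    ∃ f, IsVertexLabeling H 𝒮 f ∧ ∀ v, ∀ S ∈ 𝒮, v ∈ S.verts → f v ≤ S := by
  choose f hf𝒮 hvf hmin using hS.exists_minimal_mem
  refine ⟨f, ⟨⟨fun v _ => hf𝒮 v, fun u _ v _ huv => ?_, fun T hT => ?_⟩, fun v => ?_⟩, hmin⟩
  · exact hS.eq_of_minimal (hf𝒮 u) (hvf u) (huv ▸ hvf v) (hmin u) (huv ▸ hmin v)
  · obtain ⟨v, hvT, hv⟩ := hS.exists_mem_forall_lt_not_mem hT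
    exact ⟨v, trivial, (hmin v T hT hvT).eq_of_not_lt fun hlt => hv _ (hf𝒮 v) hlt (hvf v)⟩
  · exact ⟨hvf v, fun S hS' hlt hvS => hlt.not_ge (hmin v S hS' hvS)⟩

end IsAdmissibleTubing

lemma IsVertexLabeling.mem {G : SimpleGraph V} {𝒯 : Set G.Subgraph} {g : V → G.Subgraph}
    (hg : IsVertexLabeling G 𝒯 g) (v : V) : g v ∈ 𝒯 :=
  hg.1.1 (Set.mem_univ v)

lemma IsVertexLabeling.mem_verts {G : SimpleGraph V} {𝒯 : Set G.Subgraph} {g : V → G.Subgraph}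
    (hg : IsVertexLabeling G 𝒯 g) (v : V) : v ∈ (g v).verts :=
  (hg.2 v).1

section Tube

variable (H : SimpleGraph V) (η : V → ℝ)

/-- The tube `T_v` of the tubing determined by `η`. -/
def tube (v : V) : H.Subgraph := componentIn H {u | η u ≤ η v} v

variable {H η} {u v : V}

lemma le_of_mem_tube (h : u ∈ (tube H η v).verts) : η u ≤ η v :=
  componentIn_verts_subset (s := {w | η w ≤ η v}) (le_refl (η v)) h

lemma tube_le_tube (h : u ∈ (tube H η v).verts) : tube H η u ≤ tube H η v :=
  le_componentIn componentIn_connected (fun _ hw => (le_of_mem_tube hw).trans (le_of_mem_tube h))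
    mem_componentIn_self h

lemma tube_nested_of_adj {a b : V} (hab : H.Adj a b) (ha : a ∈ (tube H η u).verts)
    (hb : b ∈ (tube H η v).verts) : Nested (tube H η u) (tube H η v) := by
  wlog huv : η u ≤ η v generalizing u v a b
  · exact (this hab.symm hb ha (le_of_not_ge huv)).symm
  exact Or.inl <| le_componentIn componentIn_connected (fun _ hw => (le_of_mem_tube hw).trans huv)
    ha (mem_componentIn_of_adj hb
      (restrictTo_adj.2 ⟨hab.symm, le_of_mem_tube hb, (le_of_mem_tube ha).trans huv⟩))

lemma lt_of_tube_lt (hinj : Function.Injective η) (h : tube H η u < tube H η v) : η u < η v :=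
  (le_of_mem_tube (h.le.1 mem_componentIn_self)).lt_of_ne fun he => h.ne (congrArg _ (hinj he))

lemma mem_range_tube_of_forall_compatible [Finite V] (hinj : Function.Injective η)
    {T : H.Subgraph} (hT : T.Connected) (hi : T.IsInduced)
    (hc : ∀ v, T ≠ tube H η v → Compatible T (tube H η v)) : T ∈ Set.range (tube H η) := by
  obtain ⟨m, hm, hmax⟩ := Set.exists_max_image T.verts η T.verts.toFinite hT.nonempty
  have hTm : T ≤ tube H η m := le_componentIn hT hmax hm mem_componentIn_self
  refine ⟨m, ?_⟩
  by_contra hne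
  obtain ⟨w, hw, hwT⟩ := Set.not_subset.1 fun h => hne (le_antisymm (hi.le_of_verts_subset h) hTm)
  obtain ⟨a, haT, b, ⟨hb, hbT⟩, hab⟩ := exists_adj_of_subset_componentIn hTm.1 hm hw hwT
  have hbm : η b < η m := (le_of_mem_tube hb).lt_of_ne fun h => hbT (hinj h ▸ hm)
  rcases compatible_iff.1 (hc b fun h => hbT (h ▸ mem_componentIn_self)) a b hab haT
    mem_componentIn_self with h | h
  · exact hbm.not_ge (le_of_mem_tube (h.1 hm))
  · exact hbT (h.1 mem_componentIn_self)

lemma isAdmissibleTubing_range_tube [Finite V] (hinj : Function.Injective η) :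
    IsAdmissibleTubing H (Set.range (tube H η)) := by
  refine ⟨⟨?_, ?_⟩, fun 𝒞 h𝒞 hsub T hT => ?_⟩
  · rintro _ ⟨v, rfl⟩
    exact ⟨componentIn_connected, componentIn_isInduced⟩
  · rintro _ ⟨u, rfl⟩ _ ⟨v, rfl⟩ -
    exact compatible_iff.2 fun a b hab ha hb => tube_nested_of_adj hab ha hb
  · exact mem_range_tube_of_forall_compatible hinj (h𝒞.1 T hT).1 (h𝒞.1 T hT).2
      fun v hne => h𝒞.2 hT (hsub ⟨v, rfl⟩) hne

lemma IsVertexLabeling.eq_tube {g : V → H.Subgraph}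
    (hg : IsVertexLabeling H (Set.range (tube H η)) g) (v : V) : g v = tube H η v := by
  obtain ⟨w, hw⟩ := hg.mem v
  have hle : tube H η v ≤ g v := hw ▸ tube_le_tube (hw ▸ hg.mem_verts v)
  exact (hle.eq_of_not_lt fun hlt => (hg.2 v).2 _ ⟨v, rfl⟩ hlt mem_componentIn_self).symm

end Tube

section Uniqueness

variable {H : SimpleGraph V} {η : V → ℝ} {𝒮 : Set H.Subgraph} {f : V → H.Subgraph}
  (hS : IsAdmissibleTubing H 𝒮) (hf : IsVertexLabeling H 𝒮 f)
  (hmin : ∀ v, ∀ S ∈ 𝒮, v ∈ S.verts → f v ≤ S) (hord : ∀ u v, f u < f v → η u < η v)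
include hS hf hmin hord

lemma IsVertexLabeling.le_tube (v : V) : f v ≤ tube H η v := by
  refine le_componentIn (hS.connected (hf.mem v)) (fun u hu => ?_) (hf.mem_verts v)
    mem_componentIn_self
  obtain rfl | hne := eq_or_ne u v
  · exact le_refl (η u)
  · have hlt : f u < f v := (hmin u _ (hf.mem v) hu).lt_of_ne fun h =>
      hne (hf.1.2.1 (Set.mem_univ u) (Set.mem_univ v) h)
    exact (hord u v hlt).le

lemma IsVertexLabeling.eq_tube_of_minimal (hinj : Function.Injective η) (v : V) :
    f v = tube H η v := by
  have hle := hf.le_tube hS hmin hord v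
  by_contra hne
  obtain ⟨w, hw, hwf⟩ := Set.not_subset.1 fun h =>
    hne (le_antisymm hle ((hS.isInduced (hf.mem v)).le_of_verts_subset h))
  obtain ⟨a, ha, b, ⟨hb, hbf⟩, hab⟩ :=
    exists_adj_of_subset_componentIn hle.1 (hf.mem_verts v) hw hwf
  have hbv : η b < η v := (le_of_mem_tube hb).lt_of_ne fun h => hbf (hinj h ▸ hf.mem_verts v)
  rcases hS.nested_of_adj (hf.mem v) (hf.mem b) hab ha (hf.mem_verts b) with h | h
  · exact hbv.not_ge (le_of_mem_tube ((hf.le_tube hS hmin hord b).1 (h.1 (hf.mem_verts v))))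
  · exact hbf (h.1 (hf.mem_verts b))

end Uniqueness

lemma IsAdmissibleTubing.eq_range_tube [Finite V] {H : SimpleGraph V} {η : V → ℝ}
    {𝒮 : Set H.Subgraph} (hS : IsAdmissibleTubing H 𝒮) (hinj : Function.Injective η)
    (hP : ∀ g, IsVertexLabeling H 𝒮 g → ∀ u v, g u < g v → η u < η v) :
    𝒮 = Set.range (tube H η) := by
  obtain ⟨f, hf, hmin⟩ := hS.exists_isVertexLabeling
  rw [← hf.1.image_eq, Set.image_univ]
  exact congrArg Set.range (funext (hf.eq_tube_of_minimal hS hmin (hP f hf) hinj))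

theorem regions_partition_general {V : Type*} [Fintype V] (H : SimpleGraph V)
    (η : V → ℝ) (hinj : Function.Injective η) :
    ∃! 𝒯 : Set H.Subgraph, IsAdmissibleTubing H 𝒯 ∧
      ∀ g : V → H.Subgraph, IsVertexLabeling H 𝒯 g →
        ∀ u v : V, g u < g v → η u < η v := by
  refine ⟨Set.range (tube H η), ⟨isAdmissibleTubing_range_tube hinj, fun g hg u v huv => ?_⟩,
    fun 𝒮 ⟨hS, hP⟩ => hS.eq_range_tube hinj hP⟩
  rw [hg.eq_tube u, hg.eq_tube v] at huv
  exact lt_of_tube_lt hinj huv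

/-- any point of the negative orthant with pairwise distinct coordinates lies
in the region `U_𝒯` for exactly one admissible tubing `𝒯` of `H` (the regions `U_𝒯`
partition the orthant up to measure zero). -/
theorem regions_partition {V : Type*} [Fintype V] (H : SimpleGraph V)
    (η : V → ℝ) (hneg : ∀ v, η v < 0) (hinj : Function.Injective η) :
    ∃! 𝒯 : Set H.Subgraph, IsAdmissibleTubing H 𝒯 ∧
      ∀ g : V → H.Subgraph, IsVertexLabeling H 𝒯 g →
        ∀ u v : V, g u < g v → η u < η v :=
  regions_partition_general H η hinj

end Cosmo
end
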